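/- arXiv:2605.11399 — 9 statements merged into one kernel-verified Lean document; each statement's English description precedes it below -/
import Mathlib

section
/- For every real time t, the battery population satisfies p(t) = |α(t)|² = (1 + cos((e₁ − e₂)t) + 2Δ²/J₁²)/(2 + 2Δ²/J₁²), and consequently 1 − p(t) = |β(t)|² = (1 − cos((e₁ − e₂)t))/(2 + 2Δ²/J₁²). -/
/-!
Both amplitudes are two-phase combinations, so their squared moduli follow from
`|a e^{-ix} - b e^{-iy}|² = a² + b² - 2ab cos(x - y)`. The eigenvector ratios
`ξ₁,₂ = (Δ ± Ω)/J₁` satisfy `ξ₁ ξ₂ = -1` and `(ξ₁ - ξ₂)² = 4Ω²/J₁² = 4 + 4Δ²/J₁²`,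
which collapses both expressions to the stated closed forms.
-/

open Complex

lemma sq_norm_exp_mul_sub_exp_mul (a b x y : ℝ) :
    ‖exp (-I * (x : ℂ)) * (a : ℂ) - exp (-I * (y : ℂ)) * (b : ℂ)‖ ^ 2 =
      a ^ 2 + b ^ 2 - 2 * a * b * Real.cos (x - y) := by
  have hphase (θ : ℝ) : exp (-I * (θ : ℂ)) = (Real.cos θ : ℂ) - (Real.sin θ : ℂ) * I := by
    rw [show -I * (θ : ℂ) = ((-θ : ℝ) : ℂ) * I by push_cast; ring, exp_mul_I,
      ← ofReal_cos, ← ofReal_sin, Real.cos_neg, Real.sin_neg]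
    push_cast
    ring
  rw [Complex.sq_norm, hphase, hphase, normSq_apply]
  simp only [sub_re, sub_im, mul_re, mul_im, ofReal_re, ofReal_im, I_re, I_im]
  linear_combination a ^ 2 * Real.sin_sq_add_cos_sq x + b ^ 2 * Real.sin_sq_add_cos_sq y +
    2 * a * b * Real.cos_sub x y

section MixingAngle

variable {J Δ Ω : ℝ}

lemma mixing_ratio_mul (hJ : J ≠ 0) (hΩ : Ω ^ 2 = J ^ 2 + Δ ^ 2) :
    (Δ + Ω) / J * ((Δ - Ω) / J) = -1 := by
  field_simp
  linear_combination -hΩ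

lemma mixing_ratio_sub_sq (hJ : J ≠ 0) (hΩ : Ω ^ 2 = J ^ 2 + Δ ^ 2) :
    ((Δ + Ω) / J - (Δ - Ω) / J) ^ 2 = 2 * (2 + 2 * Δ ^ 2 / J ^ 2) := by
  field_simp
  linear_combination 4 * hΩ

end MixingAngle

theorem stmt_0_general (J1 t : ℝ) (hJ1 : J1 ≠ 0)
    (Δ Ω e1 e2 ξ1 ξ2 p : ℝ) (α β : ℂ)
    (hΩ : Ω = Real.sqrt (J1 ^ 2 + Δ ^ 2))
    (hξ1 : ξ1 = (Δ + Ω) / J1) (hξ2 : ξ2 = (Δ - Ω) / J1)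
    (hα : α = (Complex.exp (-Complex.I * ((e1 * t : ℝ) : ℂ)) * (ξ1 : ℂ) -
        Complex.exp (-Complex.I * ((e2 * t : ℝ) : ℂ)) * (ξ2 : ℂ)) / ((ξ1 : ℂ) - (ξ2 : ℂ)))
    (hβ : β = (Complex.exp (-Complex.I * ((e1 * t : ℝ) : ℂ)) -
        Complex.exp (-Complex.I * ((e2 * t : ℝ) : ℂ))) / ((ξ1 : ℂ) - (ξ2 : ℂ)))
    (hp : p = ‖α‖ ^ 2) :
    p = (1 + Real.cos ((e1 - e2) * t) + 2 * Δ ^ 2 / J1 ^ 2) / (2 + 2 * Δ ^ 2 / J1 ^ 2) ∧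
    1 - p = ‖β‖ ^ 2 ∧
    1 - p = (1 - Real.cos ((e1 - e2) * t)) / (2 + 2 * Δ ^ 2 / J1 ^ 2) := by
  set c := Real.cos ((e1 - e2) * t)
  set D := 2 + 2 * Δ ^ 2 / J1 ^ 2
  have hD : 0 < D := by positivity
  have hΩsq : Ω ^ 2 = J1 ^ 2 + Δ ^ 2 := by rw [hΩ]; exact Real.sq_sqrt (by positivity)
  have hprod : ξ1 * ξ2 = -1 := by rw [hξ1, hξ2]; exact mixing_ratio_mul hJ1 hΩsq
  have hdiff : (ξ1 - ξ2) ^ 2 = 2 * D := by rw [hξ1, hξ2]; exact mixing_ratio_sub_sq hJ1 hΩsq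
  have hphase : (e1 - e2) * t = e1 * t - e2 * t := sub_mul e1 e2 t
  have hsq_norm_div (z : ℂ) : ‖z / ((ξ1 : ℂ) - (ξ2 : ℂ))‖ ^ 2 = ‖z‖ ^ 2 / (2 * D) := by
    rw [← ofReal_sub, norm_div, norm_real, div_pow, Real.norm_eq_abs, sq_abs, hdiff]
  -- `ξ1 ξ2 = -1` turns `ξ1² + ξ2² - 2 ξ1 ξ2 c` into `(ξ1 - ξ2)² - 2 (1 - c)`.
  have hp' : p = 1 - (1 - c) / D := by
    rw [hp, hα, hsq_norm_div, sq_norm_exp_mul_sub_exp_mul, ← hphase]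
    field_simp
    linear_combination hdiff + 2 * (1 - c) * hprod
  have hβ' : ‖β‖ ^ 2 = (1 - c) / D := by
    have hnum := sq_norm_exp_mul_sub_exp_mul 1 1 (e1 * t) (e2 * t)
    simp only [ofReal_one, mul_one, one_pow] at hnum
    rw [hβ, hsq_norm_div, hnum, ← hphase]
    field_simp
    ring
  refine ⟨?_, by rw [hp', hβ']; ring, by rw [hp']; ring⟩
  rw [hp', eq_div_iff hD.ne']
  simp only [D]
  field_simp
  ring

/-- For every real time `t`, the battery population satisfies
`p(t) = |α(t)|² = (1 + cos((e₁−e₂)t) + 2Δ²/J₁²)/(2 + 2Δ²/J₁²)`, and consequently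
`1 − p(t) = |β(t)|² = (1 − cos((e₁−e₂)t))/(2 + 2Δ²/J₁²)`. -/
theorem stmt_0 (ωb ωc J1 J2 t : ℝ) (hωb : 0 < ωb) (hωc : 0 < ωc) (hJ1 : J1 ≠ 0)
    (Δ Ω e1 e2 ξ1 ξ2 p : ℝ) (α β : ℂ)
    (hΔ : Δ = ωb - ωc) (hΩ : Ω = Real.sqrt (J1 ^ 2 + Δ ^ 2))
    (he1 : e1 = Ω - J2) (he2 : e2 = -Ω - J2)
    (hξ1 : ξ1 = (Δ + Ω) / J1) (hξ2 : ξ2 = (Δ - Ω) / J1)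
    (hα : α = (Complex.exp (-Complex.I * ((e1 * t : ℝ) : ℂ)) * (ξ1 : ℂ) -
        Complex.exp (-Complex.I * ((e2 * t : ℝ) : ℂ)) * (ξ2 : ℂ)) / ((ξ1 : ℂ) - (ξ2 : ℂ)))
    (hβ : β = (Complex.exp (-Complex.I * ((e1 * t : ℝ) : ℂ)) -
        Complex.exp (-Complex.I * ((e2 * t : ℝ) : ℂ))) / ((ξ1 : ℂ) - (ξ2 : ℂ)))
    (hp : p = ‖α‖ ^ 2) :
    p = (1 + Real.cos ((e1 - e2) * t) + 2 * Δ ^ 2 / J1 ^ 2) / (2 + 2 * Δ ^ 2 / J1 ^ 2) ∧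
    1 - p = ‖β‖ ^ 2 ∧
    1 - p = (1 - Real.cos ((e1 - e2) * t)) / (2 + 2 * Δ ^ 2 / J1 ^ 2) :=
  stmt_0_general J1 t hJ1 Δ Ω e1 e2 ξ1 ξ2 p α β hΩ hξ1 hξ2 hα hβ hp
end

section
/- (Theorem 1) For every real time t, the battery capacity and the battery–charger entanglement satisfy C_b(t) = 2 ω_b √(1 − E(t)²); in particular the battery capacity decreases monotonically as the entanglement increases. -/
/-!
Since ξ₁ ξ₂ = −1, the two eigenvectors (ξ₁, 1) and (ξ₂, 1) of the Hamiltonian are orthogonal, so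
the evolution is unitary and |α|² + |β|² = 1 for all t. Then 1 − E² = (|α|² + |β|²)² − 4|α|²|β|² =
(|α|² − |β|²)² = (1 − 2p)², and the capacity 2 ω_b |1 − 2p| is 2 ω_b √(1 − E²).
-/

open Complex

lemma norm_sq_mul_sub_add_norm_sq_sub {a b : ℂ} {x y : ℝ} (hxy : x * y = -1) :
    ‖a * x - b * y‖ ^ 2 + ‖a - b‖ ^ 2 = ‖a‖ ^ 2 * (x ^ 2 + 1) + ‖b‖ ^ 2 * (y ^ 2 + 1) := by
  have hcross : (a * x * (starRingEnd ℂ) (b * y)).re = x * y * (a * (starRingEnd ℂ) b).re := by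
    simp only [map_mul, conj_ofReal, mul_re, mul_im, ofReal_re, ofReal_im]
    ring
  simp only [Complex.sq_norm, normSq_sub, hcross, normSq_mul, normSq_ofReal]
  linear_combination (-2 * (a * (starRingEnd ℂ) b).re) * hxy

lemma norm_sq_add_norm_sq_eq_one_of_mul_eq_neg_one {a b : ℂ} {x y : ℝ}
    (ha : ‖a‖ = 1) (hb : ‖b‖ = 1) (hxy : x * y = -1) (hne : x ≠ y) :
    ‖(a * x - b * y) / ((x : ℂ) - y)‖ ^ 2 + ‖(a - b) / ((x : ℂ) - y)‖ ^ 2 = 1 := by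
  have hsub : x - y ≠ 0 := sub_ne_zero.mpr hne
  rw [norm_div, norm_div, div_pow, div_pow, ← add_div,
    norm_sq_mul_sub_add_norm_sq_sub hxy, ha, hb, ← ofReal_sub, norm_real, Real.norm_eq_abs,
    sq_abs, div_eq_one_iff_eq (pow_ne_zero 2 hsub)]
  linear_combination 2 * hxy

lemma norm_exp_neg_I_mul_ofReal (r : ℝ) : ‖exp (-I * r)‖ = 1 := by
  rw [show -I * r = ((-r : ℝ) : ℂ) * I by push_cast; ring, norm_exp_ofReal_mul_I]

lemma add_div_mul_sub_div_eq_neg_one {J Δ Ω : ℝ} (hJ : J ≠ 0) (hΩ : Ω ^ 2 = J ^ 2 + Δ ^ 2) :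
    (Δ + Ω) / J * ((Δ - Ω) / J) = -1 := by
  field_simp
  linear_combination -hΩ

lemma add_div_ne_sub_div_of_pos {J Δ Ω : ℝ} (hJ : J ≠ 0) (hΩ : 0 < Ω) :
    (Δ + Ω) / J ≠ (Δ - Ω) / J := by
  rw [Ne, div_left_inj' hJ]
  linarith

lemma abs_one_sub_two_mul_sq_eq_sqrt {u v : ℝ} (h : u ^ 2 + v ^ 2 = 1) :
    |1 - 2 * u ^ 2| = √(1 - (2 * u * v) ^ 2) := by
  rw [show 1 - (2 * u * v) ^ 2 = (1 - 2 * u ^ 2) ^ 2 by linear_combination (-4 * u ^ 2) * h,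
    Real.sqrt_sq_eq_abs]

theorem stmt_3_general (ωb J1 t : ℝ) (hJ1 : J1 ≠ 0)
    (Δ Ω e1 e2 ξ1 ξ2 p : ℝ) (α β : ℂ)
    (hΩ : Ω = Real.sqrt (J1 ^ 2 + Δ ^ 2))
    (hξ1 : ξ1 = (Δ + Ω) / J1) (hξ2 : ξ2 = (Δ - Ω) / J1)
    (hα : α = (Complex.exp (-Complex.I * ((e1 * t : ℝ) : ℂ)) * (ξ1 : ℂ) -
        Complex.exp (-Complex.I * ((e2 * t : ℝ) : ℂ)) * (ξ2 : ℂ)) / ((ξ1 : ℂ) - (ξ2 : ℂ)))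
    (hβ : β = (Complex.exp (-Complex.I * ((e1 * t : ℝ) : ℂ)) -
        Complex.exp (-Complex.I * ((e2 * t : ℝ) : ℂ))) / ((ξ1 : ℂ) - (ξ2 : ℂ)))
    (hp : p = ‖α‖ ^ 2)
    (E Cb : ℝ)
    (hE : E = 2 * ‖α‖ * ‖β‖)
    (hCb : Cb = 2 * ωb * |1 - 2 * p|) :
    Cb = 2 * ωb * Real.sqrt (1 - E ^ 2) := by
  have hΩsq : Ω ^ 2 = J1 ^ 2 + Δ ^ 2 := by
    rw [hΩ, Real.sq_sqrt (by positivity)]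
  have hΩpos : 0 < Ω := by
    rw [hΩ]
    exact Real.sqrt_pos.mpr (by positivity)
  have hnormalized : ‖α‖ ^ 2 + ‖β‖ ^ 2 = 1 := by
    rw [hα, hβ]
    exact norm_sq_add_norm_sq_eq_one_of_mul_eq_neg_one (norm_exp_neg_I_mul_ofReal _)
      (norm_exp_neg_I_mul_ofReal _) (hξ1 ▸ hξ2 ▸ add_div_mul_sub_div_eq_neg_one hJ1 hΩsq)
      (hξ1 ▸ hξ2 ▸ add_div_ne_sub_div_of_pos hJ1 hΩpos)
  rw [hCb, hE, hp, abs_one_sub_two_mul_sq_eq_sqrt hnormalized]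

theorem stmt_3 (ωb ωc J1 J2 t : ℝ) (hωb : 0 < ωb) (hωc : 0 < ωc) (hJ1 : J1 ≠ 0)
    (Δ Ω e1 e2 ξ1 ξ2 p : ℝ) (α β : ℂ)
    (hΔ : Δ = ωb - ωc) (hΩ : Ω = Real.sqrt (J1 ^ 2 + Δ ^ 2))
    (he1 : e1 = Ω - J2) (he2 : e2 = -Ω - J2)
    (hξ1 : ξ1 = (Δ + Ω) / J1) (hξ2 : ξ2 = (Δ - Ω) / J1)
    (hα : α = (Complex.exp (-Complex.I * ((e1 * t : ℝ) : ℂ)) * (ξ1 : ℂ) -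
        Complex.exp (-Complex.I * ((e2 * t : ℝ) : ℂ)) * (ξ2 : ℂ)) / ((ξ1 : ℂ) - (ξ2 : ℂ)))
    (hβ : β = (Complex.exp (-Complex.I * ((e1 * t : ℝ) : ℂ)) -
        Complex.exp (-Complex.I * ((e2 * t : ℝ) : ℂ))) / ((ξ1 : ℂ) - (ξ2 : ℂ)))
    (hp : p = ‖α‖ ^ 2)
    (E Cb : ℝ)
    (hE : E = 2 * ‖α‖ * ‖β‖)
    (hCb : Cb = 2 * ωb * |1 - 2 * p|) :
    Cb = 2 * ωb * Real.sqrt (1 - E ^ 2) :=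
  stmt_3_general ωb J1 t hJ1 Δ Ω e1 e2 ξ1 ξ2 p α β hΩ hξ1 hξ2 hα hβ hp E Cb hE hCb
end

section
/- (Theorem 2) For every real time t, the sum of the battery and charger capacities is bounded by the total system capacity: 2 ω_b |1 − 2 p(t)| + 2 ω_c |1 − 2 p(t)| ≤ ε₄ − ε₁, where ε₁ and ε₄ are the smallest and largest eigenvalues of the full Hamiltonian H. -/
/-!
The battery population `p = ‖α‖²` lies in `[0, 1]`: since `ξ₁ ξ₂ = -J₁² / J₁² ≤ 0`, the triangle
inequality gives `‖u ξ₁ - v ξ₂‖ ≤ |ξ₁| + |ξ₂| = |ξ₁ - ξ₂|` for phases `u, v`. Hence both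
capacities together are at most `2 |ω_b + ω_c|`, the gap between the eigenvalues
`J₂ ± (ω_b + ω_c)` of `H`, which is at most `ε₄ - ε₁`.
-/

open Complex

lemma abs_add_abs_eq_abs_sub_of_mul_nonpos {x y : ℝ} (hxy : x * y ≤ 0) :
    |x| + |y| = |x - y| := by
  refine (sq_eq_sq₀ (by positivity) (abs_nonneg _)).1 ?_
  rw [add_sq, sq_abs, sq_abs, sq_abs, mul_assoc, ← abs_mul, abs_of_nonpos hxy]
  ring

lemma norm_mul_ofReal_sub_mul_ofReal_le {u v : ℂ} (hu : ‖u‖ ≤ 1) (hv : ‖v‖ ≤ 1) {x y : ℝ}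
    (hxy : x * y ≤ 0) : ‖u * x - v * y‖ ≤ |x - y| :=
  calc ‖u * x - v * y‖ ≤ ‖u‖ * |x| + ‖v‖ * |y| := by
        simpa only [norm_mul, norm_real, Real.norm_eq_abs] using norm_sub_le (u * x) (v * y)
    _ ≤ |x| + |y| := by gcongr <;> apply mul_le_of_le_one_left (abs_nonneg _) ‹_›
    _ = |x - y| := abs_add_abs_eq_abs_sub_of_mul_nonpos hxy

lemma norm_div_ofReal_sub_le_one {u v : ℂ} (hu : ‖u‖ ≤ 1) (hv : ‖v‖ ≤ 1) {x y : ℝ}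
    (hxy : x * y ≤ 0) : ‖(u * x - v * y) / ((x : ℂ) - y)‖ ≤ 1 := by
  rw [norm_div, ← ofReal_sub, norm_real, Real.norm_eq_abs]
  exact div_le_one_of_le₀ (norm_mul_ofReal_sub_mul_ofReal_le hu hv hxy) (abs_nonneg _)

lemma div_mul_div_nonpos_of_eq_sqrt {J Δ Ω : ℝ} (hΩ : Ω = √(J ^ 2 + Δ ^ 2)) :
    (Δ + Ω) / J * ((Δ - Ω) / J) ≤ 0 := by
  have hΩsq : Ω ^ 2 = J ^ 2 + Δ ^ 2 := hΩ ▸ Real.sq_sqrt (by positivity)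
  rw [div_mul_div_comm]
  exact div_nonpos_of_nonpos_of_nonneg (by nlinarith) (mul_self_nonneg J)

lemma two_mul_abs_le_max_sub_min (a b c s : ℝ) :
    2 * |s| ≤ max (max a b) (max (c + s) (c - s)) - min (min a b) (min (c + s) (c - s)) :=
  calc 2 * |s| = |(c + s) - (c - s)| := by rw [add_sub_sub_cancel, ← two_mul, abs_mul, abs_two]
    _ = max (c + s) (c - s) - min (c + s) (c - s) := (max_sub_min_eq_abs' _ _).symm
    _ ≤ _ := sub_le_sub (le_max_right _ _) (min_le_right _ _)

theorem stmt_4_general (ωb ωc J1 J2 t : ℝ)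
    (Δ Ω e1 e2 ξ1 ξ2 p : ℝ) (α : ℂ)
    (hΩ : Ω = Real.sqrt (J1 ^ 2 + Δ ^ 2))
    (hξ1 : ξ1 = (Δ + Ω) / J1) (hξ2 : ξ2 = (Δ - Ω) / J1)
    (hα : α = (Complex.exp (-Complex.I * ((e1 * t : ℝ) : ℂ)) * (ξ1 : ℂ) -
        Complex.exp (-Complex.I * ((e2 * t : ℝ) : ℂ)) * (ξ2 : ℂ)) / ((ξ1 : ℂ) - (ξ2 : ℂ)))
    (hp : p = ‖α‖ ^ 2)
    (ε1 ε4 : ℝ)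
    (hε1 : ε1 = min (min (Ω - J2) (-Ω - J2)) (min (J2 + (ωb + ωc)) (J2 - (ωb + ωc))))
    (hε4 : ε4 = max (max (Ω - J2) (-Ω - J2)) (max (J2 + (ωb + ωc)) (J2 - (ωb + ωc)))) :
    2 * ωb * |1 - 2 * p| + 2 * ωc * |1 - 2 * p| ≤ ε4 - ε1 := by
  have hξ : ξ1 * ξ2 ≤ 0 := hξ1 ▸ hξ2 ▸ div_mul_div_nonpos_of_eq_sqrt hΩ
  have hα1 : ‖α‖ ≤ 1 := hα ▸ norm_div_ofReal_sub_le_one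
    (norm_exp_neg_I_mul_ofReal _).le (norm_exp_neg_I_mul_ofReal _).le hξ
  have hp0 : 0 ≤ p := hp ▸ sq_nonneg _
  have hp1 : p ≤ 1 := hp ▸ pow_le_one₀ (norm_nonneg α) hα1
  have hp01 : |1 - 2 * p| ≤ 1 := abs_le.2 ⟨by linarith, by linarith⟩
  calc 2 * ωb * |1 - 2 * p| + 2 * ωc * |1 - 2 * p| = 2 * ((ωb + ωc) * |1 - 2 * p|) := by ring
    _ ≤ 2 * |ωb + ωc| := by
      gcongr
      calc (ωb + ωc) * |1 - 2 * p| ≤ |ωb + ωc| * |1 - 2 * p| := by gcongr; exact le_abs_self _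
        _ ≤ |ωb + ωc| := mul_le_of_le_one_right (abs_nonneg _) hp01
    _ ≤ ε4 - ε1 := hε1 ▸ hε4 ▸ two_mul_abs_le_max_sub_min _ _ J2 _

theorem stmt_4 (ωb ωc J1 J2 t : ℝ) (hωb : 0 < ωb) (hωc : 0 < ωc) (hJ1 : J1 ≠ 0)
    (Δ Ω e1 e2 ξ1 ξ2 p : ℝ) (α β : ℂ)
    (hΔ : Δ = ωb - ωc) (hΩ : Ω = Real.sqrt (J1 ^ 2 + Δ ^ 2))
    (he1 : e1 = Ω - J2) (he2 : e2 = -Ω - J2)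
    (hξ1 : ξ1 = (Δ + Ω) / J1) (hξ2 : ξ2 = (Δ - Ω) / J1)
    (hα : α = (Complex.exp (-Complex.I * ((e1 * t : ℝ) : ℂ)) * (ξ1 : ℂ) -
        Complex.exp (-Complex.I * ((e2 * t : ℝ) : ℂ)) * (ξ2 : ℂ)) / ((ξ1 : ℂ) - (ξ2 : ℂ)))
    (hβ : β = (Complex.exp (-Complex.I * ((e1 * t : ℝ) : ℂ)) -
        Complex.exp (-Complex.I * ((e2 * t : ℝ) : ℂ))) / ((ξ1 : ℂ) - (ξ2 : ℂ)))
    (hp : p = ‖α‖ ^ 2)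
    (ε1 ε4 : ℝ)
    (hε1 : ε1 = min (min (Ω - J2) (-Ω - J2)) (min (J2 + (ωb + ωc)) (J2 - (ωb + ωc))))
    (hε4 : ε4 = max (max (Ω - J2) (-Ω - J2)) (max (J2 + (ωb + ωc)) (J2 - (ωb + ωc)))) :
    2 * ωb * |1 - 2 * p| + 2 * ωc * |1 - 2 * p| ≤ ε4 - ε1 :=
  stmt_4_general ωb ωc J1 J2 t Δ Ω e1 e2 ξ1 ξ2 p α hΩ hξ1 hξ2 hα hp ε1 ε4 hε1 hε4
end

section
/- (Theorem 5) For every real time t, the three-setting linear steering measure S(t) := Tr(T(t) T(t)ᵀ) − 1 of the evolved state satisfies S(t) = 8|α(t)|²|β(t)|² = 2E(t)², and the battery capacity satisfies C_b(t) = 2 ω_b √(1 − S(t)/2). -/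
/-!
For `ψ = α|01⟩ + β|10⟩` and `z = α β̄`, the Pauli correlation matrix is
`T = [[2 Re z, 2 Im z, 0], [-2 Im z, 2 Re z, 0], [0, 0, -(|α|² + |β|²)]]`, so
`Tr(T Tᵀ) = 8|α|²|β|² + (|α|² + |β|²)²`. The state is normalised because `ξ₁ ξ₂ = -1`
makes `(ξ₁, 1)` and `(ξ₂, 1)` orthogonal, whence `S = 8|α|²|β|² = 2E²`, and with `p = |α|²`,
`1 - S/2 = 1 - 4p(1 - p) = (1 - 2p)²`, which gives the capacity.
-/

open Complex Matrix Kronecker ComplexConjugate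

theorem div_mul_div_eq_neg_one_of_eq_sqrt {J Δ Ω : ℝ} (hJ : J ≠ 0)
    (hΩ : Ω = √(J ^ 2 + Δ ^ 2)) : (Δ + Ω) / J * ((Δ - Ω) / J) = -1 := by
  have hΩsq : Ω ^ 2 = J ^ 2 + Δ ^ 2 := by rw [hΩ]; exact Real.sq_sqrt (by positivity)
  field_simp
  linear_combination -hΩsq

theorem div_ne_div_of_eq_sqrt {J Δ Ω : ℝ} (hJ : J ≠ 0) (hΩ : Ω = √(J ^ 2 + Δ ^ 2)) :
    (Δ + Ω) / J ≠ (Δ - Ω) / J := by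
  have hΩpos : 0 < Ω := hΩ ▸ Real.sqrt_pos.mpr (by positivity)
  rw [Ne, div_left_inj' hJ]
  linarith

theorem normSq_add_normSq_eq_one {u v : ℂ} {x y : ℝ} (hu : ‖u‖ = 1) (hv : ‖v‖ = 1)
    (hxy : x * y = -1) (hne : x ≠ y) :
    normSq ((u * x - v * y) / (x - y)) + normSq ((u - v) / (x - y)) = 1 := by
  have hu' : normSq u = 1 := by rw [normSq_eq_norm_sq, hu, one_pow]
  have hv' : normSq v = 1 := by rw [normSq_eq_norm_sq, hv, one_pow]
  have hden : normSq ((x : ℂ) - y) = (x - y) ^ 2 := by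
    rw [← ofReal_sub, normSq_ofReal, sq]
  rw [normSq_div, normSq_div, ← add_div, hden,
    div_eq_one_iff_eq (pow_ne_zero 2 (sub_ne_zero.mpr hne))]
  simp only [normSq_apply, sub_re, sub_im, mul_re, mul_im, ofReal_re, ofReal_im] at hu' hv' ⊢
  linear_combination (x ^ 2 + 1) * hu' + (y ^ 2 + 1) * hv' +
    (2 - 2 * (u.re * v.re + u.im * v.im)) * hxy

def pauli : Fin 3 → Matrix (Fin 2) (Fin 2) ℂ :=
  ![!![0, 1; 1, 0], !![0, -I; I, 0], !![1, 0; 0, -1]]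

def singleExcitation (a b : ℂ) : Fin 2 × Fin 2 → ℂ :=
  fun x => if x = (0, 1) then a else if x = (1, 0) then b else 0

def singleExcitationCorrelation (a b : ℂ) : Matrix (Fin 3) (Fin 3) ℝ :=
  !![2 * (a * conj b).re, 2 * (a * conj b).im, 0;
    -2 * (a * conj b).im, 2 * (a * conj b).re, 0;
    0, 0, -(normSq a + normSq b)]

theorem trace_vecMulVec_singleExcitation_mul_pauli_kronecker (a b : ℂ) (i j : Fin 3) :
    (vecMulVec (singleExcitation a b) (star (singleExcitation a b)) *
      (pauli i ⊗ₖ pauli j)).trace = singleExcitationCorrelation a b i j := by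
  fin_cases i <;> fin_cases j <;>
    simp [singleExcitationCorrelation, singleExcitation, pauli, Matrix.trace, Matrix.mul_apply,
      vecMulVec_apply, kroneckerMap_apply, Fintype.sum_prod_type, Fin.sum_univ_succ, Prod.ext_iff] <;>
    apply Complex.ext <;> simp [normSq_apply] <;> ring

theorem trace_mul_transpose_singleExcitationCorrelation (a b : ℂ) :
    (singleExcitationCorrelation a b * (singleExcitationCorrelation a b)ᵀ).trace =
      8 * normSq a * normSq b + (normSq a + normSq b) ^ 2 := by
  have hz : normSq (a * conj b) = normSq a * normSq b := by rw [normSq_mul, normSq_conj]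
  rw [singleExcitationCorrelation, mul_assoc 8, ← hz]
  generalize a * conj b = z
  generalize normSq a + normSq b = n
  simp [trace_fin_three, vecMul, dotProduct, Fin.sum_univ_three, normSq_apply]
  ring

theorem stmt_8_general (ωb J1 t : ℝ) (hJ1 : J1 ≠ 0)
    (Δ Ω e1 e2 ξ1 ξ2 p : ℝ) (α β : ℂ)
    (hΩ : Ω = Real.sqrt (J1 ^ 2 + Δ ^ 2))
    (hξ1 : ξ1 = (Δ + Ω) / J1) (hξ2 : ξ2 = (Δ - Ω) / J1)
    (hα : α = (Complex.exp (-Complex.I * ((e1 * t : ℝ) : ℂ)) * (ξ1 : ℂ) -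
        Complex.exp (-Complex.I * ((e2 * t : ℝ) : ℂ)) * (ξ2 : ℂ)) / ((ξ1 : ℂ) - (ξ2 : ℂ)))
    (hβ : β = (Complex.exp (-Complex.I * ((e1 * t : ℝ) : ℂ)) -
        Complex.exp (-Complex.I * ((e2 * t : ℝ) : ℂ))) / ((ξ1 : ℂ) - (ξ2 : ℂ)))
    (hp : p = ‖α‖ ^ 2)
    (E Cb : ℝ)
    (hE : E = 2 * ‖α‖ * ‖β‖)
    (hCb : Cb = 2 * ωb * |1 - 2 * p|)
    (ψ : Fin 2 × Fin 2 → ℂ)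
    (hψ : ψ = fun x => if x = (0, 1) then α else if x = (1, 0) then β else 0)
    (ρ : Matrix (Fin 2 × Fin 2) (Fin 2 × Fin 2) ℂ)
    (hρ : ρ = Matrix.of fun i j => ψ i * star (ψ j))
    (σ : Fin 3 → Matrix (Fin 2) (Fin 2) ℂ)
    (hσ : σ = ![!![0, 1; 1, 0], !![0, -Complex.I; Complex.I, 0], !![1, 0; 0, -1]])
    (T : Matrix (Fin 3) (Fin 3) ℝ)
    (hT : ∀ i j : Fin 3, (T i j : ℂ) = (ρ * (σ i ⊗ₖ σ j)).trace)
    (S : ℝ) (hS : S = (T * Tᵀ).trace - 1) :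
    S = 8 * ‖α‖ ^ 2 * ‖β‖ ^ 2 ∧
    S = 2 * E ^ 2 ∧
    Cb = 2 * ωb * Real.sqrt (1 - S / 2) := by
  have norm_exp_neg_I_mul (r : ℝ) : ‖exp (-I * r)‖ = 1 := by rw [norm_exp]; simp
  have hnorm : normSq α + normSq β = 1 := by
    rw [hα, hβ]
    exact normSq_add_normSq_eq_one (norm_exp_neg_I_mul _) (norm_exp_neg_I_mul _)
      (hξ1 ▸ hξ2 ▸ div_mul_div_eq_neg_one_of_eq_sqrt hJ1 hΩ)
      (hξ1 ▸ hξ2 ▸ div_ne_div_of_eq_sqrt hJ1 hΩ)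
  have hTα : T = singleExcitationCorrelation α β := by
    ext i j
    apply ofReal_injective
    rw [hT, ← trace_vecMulVec_singleExcitation_mul_pauli_kronecker, hρ, hψ, hσ]
    rfl
  have hSα : S = 8 * ‖α‖ ^ 2 * ‖β‖ ^ 2 := by
    rw [hS, hTα, trace_mul_transpose_singleExcitationCorrelation, hnorm, Complex.sq_norm, Complex.sq_norm]
    ring
  refine ⟨hSα, by rw [hSα, hE]; ring, ?_⟩
  have hcap : 1 - S / 2 = (1 - 2 * p) ^ 2 := by
    rw [hSα, hp, Complex.sq_norm, Complex.sq_norm]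
    linear_combination (-4 * normSq α) * hnorm
  rw [hCb, hcap, Real.sqrt_sq_eq_abs]

/-- Theorem 5: the steering measure `S(t) = Tr(T Tᵀ) − 1` satisfies
`S = 8|α|²|β|² = 2E²` and `C_b = 2ω_b √(1 − S/2)`. -/
theorem stmt_8 (ωb ωc J1 J2 t : ℝ) (hωb : 0 < ωb) (hωc : 0 < ωc) (hJ1 : J1 ≠ 0)
    (Δ Ω e1 e2 ξ1 ξ2 p : ℝ) (α β : ℂ)
    (hΔ : Δ = ωb - ωc) (hΩ : Ω = Real.sqrt (J1 ^ 2 + Δ ^ 2))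
    (he1 : e1 = Ω - J2) (he2 : e2 = -Ω - J2)
    (hξ1 : ξ1 = (Δ + Ω) / J1) (hξ2 : ξ2 = (Δ - Ω) / J1)
    (hα : α = (Complex.exp (-Complex.I * ((e1 * t : ℝ) : ℂ)) * (ξ1 : ℂ) -
        Complex.exp (-Complex.I * ((e2 * t : ℝ) : ℂ)) * (ξ2 : ℂ)) / ((ξ1 : ℂ) - (ξ2 : ℂ)))
    (hβ : β = (Complex.exp (-Complex.I * ((e1 * t : ℝ) : ℂ)) -
        Complex.exp (-Complex.I * ((e2 * t : ℝ) : ℂ))) / ((ξ1 : ℂ) - (ξ2 : ℂ)))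
    (hp : p = ‖α‖ ^ 2)
    (E Cb : ℝ)
    (hE : E = 2 * ‖α‖ * ‖β‖)
    (hCb : Cb = 2 * ωb * |1 - 2 * p|)
    (ψ : Fin 2 × Fin 2 → ℂ)
    (hψ : ψ = fun x => if x = (0, 1) then α else if x = (1, 0) then β else 0)
    (ρ : Matrix (Fin 2 × Fin 2) (Fin 2 × Fin 2) ℂ)
    (hρ : ρ = Matrix.of fun i j => ψ i * star (ψ j))
    (σ : Fin 3 → Matrix (Fin 2) (Fin 2) ℂ)
    (hσ : σ = ![!![0, 1; 1, 0], !![0, -Complex.I; Complex.I, 0], !![1, 0; 0, -1]])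
    (T : Matrix (Fin 3) (Fin 3) ℝ)
    (hT : ∀ i j : Fin 3, (T i j : ℂ) = (ρ * (σ i ⊗ₖ σ j)).trace)
    (S : ℝ) (hS : S = (T * Tᵀ).trace - 1) :
    S = 8 * ‖α‖ ^ 2 * ‖β‖ ^ 2 ∧
    S = 2 * E ^ 2 ∧
    Cb = 2 * ωb * Real.sqrt (1 - S / 2) :=
  stmt_8_general ωb J1 t hJ1 Δ Ω e1 e2 ξ1 ξ2 p α β hΩ hξ1 hξ2 hα hβ hp E Cb hE hCb ψ hψ ρ hρ σ hσ T
    hT S hS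
end

section
/- Assume J₁ > 0. For every real time t, the l₁-norm imaginarity of the evolved state, I(t) := Σ_{i≠j} |Im(ρ(t)_{ij})| = 2|Im(α(t) β(t)*)| where ρ(t) = |ψ(t)⟩⟨ψ(t)|, is given explicitly by I(t) = (√(J₁² + Δ²)/J₁) · |sin((e₁ − e₂)t)| / (1 + Δ²/J₁²), which equals (J₁/Ω)|sin(2Ωt)|. -/
open Complex ComplexConjugate

/-! Only the off-diagonal entries `αβ*` and `βα*` of `ρ` have nonzero imaginary part, and they are
conjugate, so `I = 2 |Im (αβ*)|`. Expanding `αβ*`, the unimodular factors give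
`Im (αβ*) = sin ((e₁ - e₂) t) / (ξ₁ - ξ₂)`, and `e₁ - e₂ = 2Ω`, `ξ₁ - ξ₂ = 2Ω / J₁`. -/

theorem sum_offDiag_abs_im_outer_vec4 (a b : ℂ) :
    (∑ i : Fin 4, ∑ j : Fin 4, if i ≠ j then
      |((Matrix.of fun i j => ![0, a, b, 0] i * star (![0, a, b, 0] j)) i j).im| else 0) =
      2 * |(a * star b).im| := by
  have hba : b * conj a = conj (a * conj b) := by rw [map_mul, conj_conj, mul_comm]
  simp [Fin.sum_univ_four, -mul_im]
  rw [hba, conj_im, abs_neg]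
  ring

theorem exp_neg_I_mul_ofReal (θ : ℝ) :
    exp (-I * θ) = (Real.cos θ : ℂ) - (Real.sin θ : ℂ) * I := by
  rw [show -I * θ = ((-θ : ℝ) : ℂ) * I by push_cast; ring, exp_mul_I,
    ← ofReal_cos, ← ofReal_sin, Real.cos_neg, Real.sin_neg]
  push_cast; ring

theorem im_mul_star_eq_sin_sub_div (ξ₁ ξ₂ θ₁ θ₂ : ℝ) :
    ((exp (-I * θ₁) * ξ₁ - exp (-I * θ₂) * ξ₂) / (ξ₁ - ξ₂) *
      star ((exp (-I * θ₁) - exp (-I * θ₂)) / (ξ₁ - ξ₂))).im =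
      Real.sin (θ₁ - θ₂) / (ξ₁ - ξ₂) := by
  rcases eq_or_ne ξ₁ ξ₂ with h | h
  · simp [h]
  have hd : ((ξ₁ : ℂ) - ξ₂) = ((ξ₁ - ξ₂ : ℝ) : ℂ) := by push_cast; ring
  rw [hd, exp_neg_I_mul_ofReal, exp_neg_I_mul_ofReal, Real.sin_sub]
  simp only [div_eq_mul_inv, ← ofReal_inv, mul_im, mul_re, sub_re, sub_im, ofReal_re,
    ofReal_im, I_re, I_im, star_def, conj_re, conj_im]
  field_simp
  ring

theorem sqrt_sq_add_sq_div_div_one_add_sq_div_sq {J : ℝ} (hJ : J ≠ 0) (Δ : ℝ) :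
    √(J ^ 2 + Δ ^ 2) / J / (1 + Δ ^ 2 / J ^ 2) = J / √(J ^ 2 + Δ ^ 2) := by
  have hpos : 0 < J ^ 2 + Δ ^ 2 := by positivity
  have hden : 1 + Δ ^ 2 / J ^ 2 = √(J ^ 2 + Δ ^ 2) ^ 2 / J ^ 2 := by
    rw [Real.sq_sqrt hpos.le]
    field_simp
  rw [hden]
  field_simp

theorem stmt_11_general (J1 J2 t : ℝ) (hJ1 : 0 < J1)
    (Δ Ω e1 e2 ξ1 ξ2 : ℝ) (α β : ℂ)
    (hΩ : Ω = Real.sqrt (J1 ^ 2 + Δ ^ 2))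
    (he1 : e1 = Ω - J2) (he2 : e2 = -Ω - J2)
    (hξ1 : ξ1 = (Δ + Ω) / J1) (hξ2 : ξ2 = (Δ - Ω) / J1)
    (hα : α = (Complex.exp (-Complex.I * ((e1 * t : ℝ) : ℂ)) * (ξ1 : ℂ) -
        Complex.exp (-Complex.I * ((e2 * t : ℝ) : ℂ)) * (ξ2 : ℂ)) / ((ξ1 : ℂ) - (ξ2 : ℂ)))
    (hβ : β = (Complex.exp (-Complex.I * ((e1 * t : ℝ) : ℂ)) -
        Complex.exp (-Complex.I * ((e2 * t : ℝ) : ℂ))) / ((ξ1 : ℂ) - (ξ2 : ℂ)))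
    (ρ : Matrix (Fin 4) (Fin 4) ℂ)
    (hρ : ρ = Matrix.of fun i j => ![0, α, β, 0] i * star (![0, α, β, 0] j))
    (I : ℝ)
    (hI : I = ∑ i : Fin 4, ∑ j : Fin 4, if i ≠ j then |(ρ i j).im| else 0) :
    I = 2 * |(α * star β).im| ∧
    I = (Real.sqrt (J1 ^ 2 + Δ ^ 2) / J1) * |Real.sin ((e1 - e2) * t)| / (1 + Δ ^ 2 / J1 ^ 2) ∧
    I = (J1 / Ω) * |Real.sin (2 * Ω * t)| := by
  have hΩpos : 0 < Ω := hΩ ▸ Real.sqrt_pos.mpr (by positivity)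
  have hphase : (e1 - e2) * t = 2 * Ω * t := by rw [he1, he2]; ring
  have hgap : ξ1 - ξ2 = 2 * Ω / J1 := by rw [hξ1, hξ2]; ring
  have hI₁ : I = 2 * |(α * star β).im| := by
    rw [hI, hρ, sum_offDiag_abs_im_outer_vec4]
  have hI₃ : I = J1 / Ω * |Real.sin (2 * Ω * t)| := by
    rw [hI₁, hα, hβ, im_mul_star_eq_sin_sub_div, ← sub_mul, hphase, hgap, abs_div, abs_div,
      abs_of_pos hJ1, abs_of_pos (by positivity : 0 < 2 * Ω)]
    field_simp
  refine ⟨hI₁, ?_, hI₃⟩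
  rw [mul_div_right_comm, sqrt_sq_add_sq_div_div_one_add_sq_div_sq hJ1.ne', ← hΩ, hphase, hI₃]

theorem stmt_11 (ωb ωc J1 J2 t : ℝ) (hωb : 0 < ωb) (hωc : 0 < ωc) (hJ1 : 0 < J1)
    (Δ Ω e1 e2 ξ1 ξ2 p : ℝ) (α β : ℂ)
    (hΔ : Δ = ωb - ωc) (hΩ : Ω = Real.sqrt (J1 ^ 2 + Δ ^ 2))
    (he1 : e1 = Ω - J2) (he2 : e2 = -Ω - J2)
    (hξ1 : ξ1 = (Δ + Ω) / J1) (hξ2 : ξ2 = (Δ - Ω) / J1)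
    (hα : α = (Complex.exp (-Complex.I * ((e1 * t : ℝ) : ℂ)) * (ξ1 : ℂ) -
        Complex.exp (-Complex.I * ((e2 * t : ℝ) : ℂ)) * (ξ2 : ℂ)) / ((ξ1 : ℂ) - (ξ2 : ℂ)))
    (hβ : β = (Complex.exp (-Complex.I * ((e1 * t : ℝ) : ℂ)) -
        Complex.exp (-Complex.I * ((e2 * t : ℝ) : ℂ))) / ((ξ1 : ℂ) - (ξ2 : ℂ)))
    (hp : p = ‖α‖ ^ 2)
    (ρ : Matrix (Fin 4) (Fin 4) ℂ)
    (hρ : ρ = Matrix.of fun i j => ![0, α, β, 0] i * star (![0, α, β, 0] j))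
    (I : ℝ)
    (hI : I = ∑ i : Fin 4, ∑ j : Fin 4, if i ≠ j then |(ρ i j).im| else 0) :
    I = 2 * |(α * star β).im| ∧
    I = (Real.sqrt (J1 ^ 2 + Δ ^ 2) / J1) * |Real.sin ((e1 - e2) * t)| / (1 + Δ ^ 2 / J1 ^ 2) ∧
    I = (J1 / Ω) * |Real.sin (2 * Ω * t)| :=
  stmt_11_general J1 J2 t hJ1 Δ Ω e1 e2 ξ1 ξ2 α β hΩ he1 he2 hξ1 hξ2 hα hβ ρ hρ I hI
end

section
/- (Theorem 8) For every real time t, the l₁-norm coherence C₁(t) = 2|α(t)||β(t)| and the l₁-norm imaginarity I(t) = 2|Im(α(t)β(t)*)| satisfy C₁(t)² = 4 Re(α(t)β(t)*)² + I(t)², and the battery capacity satisfies the trade-off C_b(t) = 2 ω_b √(1 − 4 Re(α(t)β(t)*)² − I(t)²). -/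
/-!
Since `‖α β*‖ = ‖α‖ ‖β‖`, the square of the coherence `2‖α‖‖β‖` splits into the squares of twice
the real and imaginary parts of `α β*`. The evolution is unitary: with `ξ₁ ξ₂ = -1` and unimodular
phases, `‖α‖² + ‖β‖² = 1`, hence `1 - 4‖α‖²‖β‖² = (‖α‖² - ‖β‖²)² = (1 - 2p)²`, which gives the
capacity as the square root of that expression.
-/

open Complex

lemma sq_two_mul_norm_mul_norm (α β : ℂ) :
    (2 * ‖α‖ * ‖β‖) ^ 2 = 4 * (α * star β).re ^ 2 + (2 * |(α * star β).im|) ^ 2 := by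
  have h : (α * star β).re ^ 2 + (α * star β).im ^ 2 = ‖α‖ ^ 2 * ‖β‖ ^ 2 := by
    rw [← mul_pow, ← norm_star β, ← norm_mul, Complex.sq_norm, normSq_apply]
    ring
  linear_combination (-4 : ℝ) * h - 4 * sq_abs (α * star β).im

lemma one_sub_sq_re_sub_sq_im_of_norm_sq_add {α β : ℂ} (h : ‖α‖ ^ 2 + ‖β‖ ^ 2 = 1) :
    1 - 4 * (α * star β).re ^ 2 - (2 * |(α * star β).im|) ^ 2 = (1 - 2 * ‖α‖ ^ 2) ^ 2 := by
  linear_combination sq_two_mul_norm_mul_norm α β - 4 * ‖α‖ ^ 2 * h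

lemma add_sqrt_div_mul_sub_sqrt_div_eq_neg_one {J Δ : ℝ} (hJ : J ≠ 0) :
    (Δ + √(J ^ 2 + Δ ^ 2)) / J * ((Δ - √(J ^ 2 + Δ ^ 2)) / J) = -1 := by
  have hsq : √(J ^ 2 + Δ ^ 2) ^ 2 = J ^ 2 + Δ ^ 2 := Real.sq_sqrt (by positivity)
  field_simp
  linear_combination (-1 : ℝ) * hsq

lemma norm_sq_add_norm_sq_eq_sq_sub {a b : ℂ} (ha : ‖a‖ = 1) (hb : ‖b‖ = 1) {x y : ℝ}
    (hxy : x * y = -1) : ‖a * x - b * y‖ ^ 2 + ‖a - b‖ ^ 2 = (x - y) ^ 2 := by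
  have hunit {z : ℂ} (hz : ‖z‖ = 1) : z.re * z.re + z.im * z.im = 1 := by
    rw [← normSq_apply, ← Complex.sq_norm, hz, one_pow]
  simp only [Complex.sq_norm, normSq_apply, sub_re, sub_im, mul_re, mul_im, ofReal_re, ofReal_im]
  linear_combination x ^ 2 * hunit ha + y ^ 2 * hunit hb + hunit ha + hunit hb +
    (2 - 2 * (a.re * b.re + a.im * b.im)) * hxy

lemma norm_sq_add_norm_sq_div_eq_one {a b : ℂ} (ha : ‖a‖ = 1) (hb : ‖b‖ = 1) {x y : ℝ}
    (hxy : x * y = -1) : ‖(a * x - b * y) / (x - y)‖ ^ 2 + ‖(a - b) / (x - y)‖ ^ 2 = 1 := by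
  have hne : x - y ≠ 0 := by
    rw [sub_ne_zero]
    rintro rfl
    nlinarith [sq_nonneg x]
  rw [norm_div, norm_div, div_pow, div_pow, ← add_div, norm_sq_add_norm_sq_eq_sq_sub ha hb hxy,
    ← ofReal_sub, norm_real, Real.norm_eq_abs, sq_abs, div_self (pow_ne_zero 2 hne)]

theorem stmt_13_general (ωb J1 t : ℝ) (hJ1 : J1 ≠ 0)
    (Δ Ω e1 e2 ξ1 ξ2 p : ℝ) (α β : ℂ)
    (hΩ : Ω = Real.sqrt (J1 ^ 2 + Δ ^ 2))
    (hξ1 : ξ1 = (Δ + Ω) / J1) (hξ2 : ξ2 = (Δ - Ω) / J1)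
    (hα : α = (Complex.exp (-Complex.I * ((e1 * t : ℝ) : ℂ)) * (ξ1 : ℂ) -
        Complex.exp (-Complex.I * ((e2 * t : ℝ) : ℂ)) * (ξ2 : ℂ)) / ((ξ1 : ℂ) - (ξ2 : ℂ)))
    (hβ : β = (Complex.exp (-Complex.I * ((e1 * t : ℝ) : ℂ)) -
        Complex.exp (-Complex.I * ((e2 * t : ℝ) : ℂ))) / ((ξ1 : ℂ) - (ξ2 : ℂ)))
    (hp : p = ‖α‖ ^ 2)
    (Cb C1 I : ℝ)
    (hCb : Cb = 2 * ωb * |1 - 2 * p|)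
    (hC1 : C1 = 2 * ‖α‖ * ‖β‖)
    (hI : I = 2 * |(α * star β).im|) :
    C1 ^ 2 = 4 * (α * star β).re ^ 2 + I ^ 2 ∧
    Cb = 2 * ωb * Real.sqrt (1 - 4 * (α * star β).re ^ 2 - I ^ 2) := by
  have hξ : ξ1 * ξ2 = -1 := by
    rw [hξ1, hξ2, hΩ]
    exact add_sqrt_div_mul_sub_sqrt_div_eq_neg_one hJ1
  have hphase (x : ℝ) : ‖Complex.exp (-Complex.I * x)‖ = 1 := by simp [norm_exp]
  have hnorm : ‖α‖ ^ 2 + ‖β‖ ^ 2 = 1 := by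
    rw [hα, hβ]
    exact norm_sq_add_norm_sq_div_eq_one (hphase _) (hphase _) hξ
  subst hC1 hI hCb hp
  refine ⟨sq_two_mul_norm_mul_norm α β, ?_⟩
  rw [one_sub_sq_re_sub_sq_im_of_norm_sq_add hnorm, Real.sqrt_sq_eq_abs]

theorem stmt_13 (ωb ωc J1 J2 t : ℝ) (hωb : 0 < ωb) (hωc : 0 < ωc) (hJ1 : J1 ≠ 0)
    (Δ Ω e1 e2 ξ1 ξ2 p : ℝ) (α β : ℂ)
    (hΔ : Δ = ωb - ωc) (hΩ : Ω = Real.sqrt (J1 ^ 2 + Δ ^ 2))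
    (he1 : e1 = Ω - J2) (he2 : e2 = -Ω - J2)
    (hξ1 : ξ1 = (Δ + Ω) / J1) (hξ2 : ξ2 = (Δ - Ω) / J1)
    (hα : α = (Complex.exp (-Complex.I * ((e1 * t : ℝ) : ℂ)) * (ξ1 : ℂ) -
        Complex.exp (-Complex.I * ((e2 * t : ℝ) : ℂ)) * (ξ2 : ℂ)) / ((ξ1 : ℂ) - (ξ2 : ℂ)))
    (hβ : β = (Complex.exp (-Complex.I * ((e1 * t : ℝ) : ℂ)) -
        Complex.exp (-Complex.I * ((e2 * t : ℝ) : ℂ))) / ((ξ1 : ℂ) - (ξ2 : ℂ)))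
    (hp : p = ‖α‖ ^ 2)
    (Cb C1 I : ℝ)
    (hCb : Cb = 2 * ωb * |1 - 2 * p|)
    (hC1 : C1 = 2 * ‖α‖ * ‖β‖)
    (hI : I = 2 * |(α * star β).im|) :
    C1 ^ 2 = 4 * (α * star β).re ^ 2 + I ^ 2 ∧
    Cb = 2 * ωb * Real.sqrt (1 - 4 * (α * star β).re ^ 2 - I ^ 2) :=
  stmt_13_general ωb J1 t hJ1 Δ Ω e1 e2 ξ1 ξ2 p α β hΩ hξ1 hξ2 hα hβ hp Cb C1 I hCb hC1 hI
end

section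
/- (Theorem 9) For every real time t, the trace-distance quantum state texture of the battery state, T_tr(t) := ½ Tr|ρ_b(t) − f₁| where f₁ = ½[[1,1],[1,1]] and Tr|A| = Tr((A A†)^{1/2}), equals ½√((1 − 2p(t))² + 1), and consequently the battery capacity satisfies C_b(t) = 2 ω_b √(4 T_tr(t)² − 1). -/
open Complex Matrix

/-- The positive semidefinite square root of a positive semidefinite matrix (removed from
Mathlib; restored here with its former definition). -/
noncomputable def Matrix.PosSemidef.sqrt {n 𝕜 : Type*} [Fintype n] [RCLike 𝕜] [PartialOrder 𝕜]
    [DecidableEq n]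
    {A : Matrix n n 𝕜} (hA : A.PosSemidef) : Matrix n n 𝕜 :=
  hA.1.eigenvectorUnitary.1 * diagonal ((↑) ∘ (√·) ∘ hA.1.eigenvalues) *
    (star hA.1.eigenvectorUnitary : Matrix n n 𝕜)

/-! `ρ_b − f₁` is a multiple of a reflection, so `(ρ_b − f₁)(ρ_b − f₁)ᵀ` is a scalar matrix
`λ • 1` with `λ = ((1 − 2p)² + 1) / 4`. The square root of a scalar matrix is `√λ • 1`, whence
`Tr|ρ_b − f₁| = 2√λ = √((1 − 2p)² + 1)`; then `4 T_tr² − 1 = (1 − 2p)²` gives the capacity. -/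

namespace Matrix

variable {n 𝕜 : Type*} [Fintype n] [DecidableEq n] [RCLike 𝕜] {A : Matrix n n 𝕜} {r : ℝ}

theorem IsHermitian.eigenvalues_eq_of_eq_smul_one (hA : A.IsHermitian) (h : A = r • 1) (i : n) :
    hA.eigenvalues i = r := by
  have hscalar (U : unitary (Matrix n n 𝕜)) : Unitary.conjStarAlgAut 𝕜 _ U A = (r : 𝕜) • 1 := by
    rw [h, RCLike.real_smul_eq_coe_smul (K := 𝕜), map_smul, map_one]
  have hdiag := hA.conjStarAlgAut_star_eigenvectorUnitary
  rw [hscalar, smul_one_eq_diagonal] at hdiag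
  simpa using (congr_fun₂ hdiag i i).symm

theorem PosSemidef.sqrt_eq_of_eq_smul_one [PartialOrder 𝕜] (hA : A.PosSemidef) (h : A = r • 1) :
    hA.sqrt = √r • 1 := by
  have hdiag : (diagonal ((↑) ∘ (√·) ∘ hA.1.eigenvalues) : Matrix n n 𝕜) = √r • 1 := by
    rw [RCLike.real_smul_eq_coe_smul (K := 𝕜), smul_one_eq_diagonal]
    congr 1
    funext i
    simp [hA.1.eigenvalues_eq_of_eq_smul_one h i]
  rw [sqrt, hdiag, Matrix.mul_smul, mul_one, Matrix.smul_mul,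
    Unitary.mul_star_self_of_mem hA.1.eigenvectorUnitary.2]

theorem reflection_mul_transpose_self {R : Type*} [CommRing R] (a b : R) :
    !![a, b; b, -a] * (!![a, b; b, -a])ᵀ = (a ^ 2 + b ^ 2) • 1 := by
  ext i j
  fin_cases i <;> fin_cases j <;> simp [mul_apply, Fin.sum_univ_two] <;> ring

end Matrix

theorem stmt_14_general (ωb : ℝ) (p : ℝ)
    (Cb : ℝ) (hCb : Cb = 2 * ωb * |1 - 2 * p|)
    (ρb f1 : Matrix (Fin 2) (Fin 2) ℝ)
    (hρb : ρb = !![p, 0; 0, 1 - p])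
    (hf1 : f1 = (1 / 2 : ℝ) • !![1, 1; 1, 1])
    (hA : ((ρb - f1) * (ρb - f1)ᵀ).PosSemidef)
    (Ttr : ℝ) (hTtr : Ttr = (1 / 2) * hA.sqrt.trace) :
    Ttr = (1 / 2) * Real.sqrt ((1 - 2 * p) ^ 2 + 1) ∧
    Cb = 2 * ωb * Real.sqrt (4 * Ttr ^ 2 - 1) := by
  have hdiff : ρb - f1 = !![p - 1 / 2, -1 / 2; -1 / 2, -(p - 1 / 2)] := by
    subst hρb hf1
    ext i j
    fin_cases i <;> fin_cases j <;> norm_num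
    ring
  have hscalar : (ρb - f1) * (ρb - f1)ᵀ = (((1 - 2 * p) ^ 2 + 1) / 4) • 1 := by
    rw [hdiff, reflection_mul_transpose_self]
    congr 1
    ring
  have htexture : Ttr = (1 / 2) * Real.sqrt ((1 - 2 * p) ^ 2 + 1) := by
    rw [hTtr, hA.sqrt_eq_of_eq_smul_one hscalar, trace_smul, trace_one, Fintype.card_fin,
      Real.sqrt_div' _ (by norm_num : (0 : ℝ) ≤ 4), show (4 : ℝ) = 2 ^ 2 by norm_num,
      Real.sqrt_sq zero_le_two]
    simp only [smul_eq_mul]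
    ring
  refine ⟨htexture, ?_⟩
  have hcapacity : 4 * Ttr ^ 2 - 1 = (1 - 2 * p) ^ 2 := by
    rw [htexture, mul_pow, Real.sq_sqrt (by positivity)]
    ring
  rw [hCb, hcapacity, Real.sqrt_sq_eq_abs]

/-- Theorem 9: the trace-distance texture
`T_tr = ½Tr|ρ_b − f₁|` equals `½√((1−2p)²+1)`, hence `C_b = 2ω_b√(4T_tr²−1)`. -/
theorem stmt_14 (ωb ωc J1 J2 t : ℝ) (hωb : 0 < ωb) (hωc : 0 < ωc) (hJ1 : J1 ≠ 0)
    (Δ Ω e1 e2 ξ1 ξ2 p : ℝ) (α β : ℂ)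
    (hΔ : Δ = ωb - ωc) (hΩ : Ω = Real.sqrt (J1 ^ 2 + Δ ^ 2))
    (he1 : e1 = Ω - J2) (he2 : e2 = -Ω - J2)
    (hξ1 : ξ1 = (Δ + Ω) / J1) (hξ2 : ξ2 = (Δ - Ω) / J1)
    (hα : α = (Complex.exp (-Complex.I * ((e1 * t : ℝ) : ℂ)) * (ξ1 : ℂ) -
        Complex.exp (-Complex.I * ((e2 * t : ℝ) : ℂ)) * (ξ2 : ℂ)) / ((ξ1 : ℂ) - (ξ2 : ℂ)))
    (hβ : β = (Complex.exp (-Complex.I * ((e1 * t : ℝ) : ℂ)) -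
        Complex.exp (-Complex.I * ((e2 * t : ℝ) : ℂ))) / ((ξ1 : ℂ) - (ξ2 : ℂ)))
    (hp : p = ‖α‖ ^ 2)
    (Cb : ℝ) (hCb : Cb = 2 * ωb * |1 - 2 * p|)
    (ρb f1 : Matrix (Fin 2) (Fin 2) ℝ)
    (hρb : ρb = !![p, 0; 0, 1 - p])
    (hf1 : f1 = (1 / 2 : ℝ) • !![1, 1; 1, 1])
    (hA : ((ρb - f1) * (ρb - f1)ᵀ).PosSemidef)
    (Ttr : ℝ) (hTtr : Ttr = (1 / 2) * hA.sqrt.trace) :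
    Ttr = (1 / 2) * Real.sqrt ((1 - 2 * p) ^ 2 + 1) ∧
    Cb = 2 * ωb * Real.sqrt (4 * Ttr ^ 2 - 1) :=
  stmt_14_general ωb p Cb hCb ρb f1 hρb hf1 hA Ttr hTtr
end

section
/- (Theorem 10) For every real time t, the quantum state texture of the battery state and the residual battery capacity satisfy 4 T_tr(t)² = 1 + (ε₄ − ε₁ − R(t))² / (4(ω_b + ω_c)²), where R(t) := (ε₄ − ε₁) − 2(ω_b + ω_c)|1 − 2p(t)| is the residual battery capacity; in particular R(t) is negatively correlated with T_tr(t). -/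
/-!
The Gram matrix of `ρ_b - f₁` is the scalar matrix `((p - 1/2)² + 1/4) • 1`, so its square root
is `√((p - 1/2)² + 1/4) • 1` and `T_tr = √((p - 1/2)² + 1/4)`, i.e. `4 T_tr² = 1 + (1 - 2p)²`.
On the other side, `ε₄ - ε₁ - R = 2 (ω_b + ω_c) |1 - 2p|` straight from the definition of `R`.
-/

open Complex Matrix

section ScalarMatrix

variable {n 𝕜 : Type*} [Fintype n] [RCLike 𝕜] [DecidableEq n] {A : Matrix n n 𝕜} {c : ℝ}

theorem Matrix.IsHermitian.eigenvalues_eq_of_eq_smul_one_s15 (hA : A.IsHermitian)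
    (h : A = (c : 𝕜) • 1) (i : n) : hA.eigenvalues i = c := by
  have hscalar : ∀ U, Unitary.conjStarAlgAut 𝕜 _ U A = A := by
    intro U
    rw [h, map_smul, map_one]
  have hconj := hA.conjStarAlgAut_star_eigenvectorUnitary
  rw [hscalar] at hconj
  have hdiag : A i i = c := by simp [h, RCLike.real_smul_eq_coe_mul]
  have hii : A i i = hA.eigenvalues i := by simpa using congrFun (congrFun hconj i) i
  exact_mod_cast hii.symm.trans hdiag

theorem Matrix.PosSemidef.sqrt_eq_smul_one [PartialOrder 𝕜] (hA : A.PosSemidef)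
    (h : A = (c : 𝕜) • 1) : hA.sqrt = ((√c : ℝ) : 𝕜) • 1 := by
  have hdiag : diagonal ((↑) ∘ (√·) ∘ hA.1.eigenvalues) = ((√c : ℝ) : 𝕜) • (1 : Matrix n n 𝕜) := by
    ext i j
    simp [diagonal, one_apply, hA.1.eigenvalues_eq_of_eq_smul_one_s15 h]
  rw [Matrix.PosSemidef.sqrt, hdiag, mul_smul_comm, mul_one, smul_mul_assoc,
    Unitary.mul_star_self_of_mem (SetLike.coe_mem _)]

end ScalarMatrix

theorem diag_sub_half_ones_mul_transpose (p : ℝ) :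
    (!![p, 0; 0, 1 - p] - (1 / 2 : ℝ) • !![1, 1; 1, 1]) *
        (!![p, 0; 0, 1 - p] - (1 / 2 : ℝ) • !![1, 1; 1, 1])ᵀ =
      ((p - 1 / 2) ^ 2 + 1 / 4) • (1 : Matrix (Fin 2) (Fin 2) ℝ) := by
  ext i j
  fin_cases i <;> fin_cases j <;> simp [Matrix.mul_apply, Fin.sum_univ_two] <;> ring

theorem stmt_15_general (ωb ωc : ℝ) (hωb : 0 < ωb) (hωc : 0 < ωc)
    (p : ℝ)
    (ρb f1 : Matrix (Fin 2) (Fin 2) ℝ)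
    (hρb : ρb = !![p, 0; 0, 1 - p])
    (hf1 : f1 = (1 / 2 : ℝ) • !![1, 1; 1, 1])
    (hA : ((ρb - f1) * (ρb - f1)ᵀ).PosSemidef)
    (Ttr : ℝ) (hTtr : Ttr = (1 / 2) * hA.sqrt.trace)
    (ε1 ε4 R : ℝ)
    (hR : R = (ε4 - ε1) - 2 * (ωb + ωc) * |1 - 2 * p|) :
    4 * Ttr ^ 2 = 1 + (ε4 - ε1 - R) ^ 2 / (4 * (ωb + ωc) ^ 2) := by
  have hgram : (ρb - f1) * (ρb - f1)ᵀ = ((p - 1 / 2) ^ 2 + 1 / 4) • 1 := by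
    rw [hρb, hf1]
    exact diag_sub_half_ones_mul_transpose p
  have hTtr' : Ttr = √((p - 1 / 2) ^ 2 + 1 / 4) := by
    rw [hTtr, hA.sqrt_eq_smul_one (c := (p - 1 / 2) ^ 2 + 1 / 4) hgram, trace_smul, trace_one]
    simp only [RCLike.ofReal_real_eq_id, id, Fintype.card_fin, smul_eq_mul]
    ring
  have hsum : ωb + ωc ≠ 0 := by positivity
  rw [hTtr', hR, sub_sub_cancel, Real.sq_sqrt (by positivity), mul_pow, mul_pow, sq_abs]
  field_simp
  ring

theorem stmt_15 (ωb ωc J1 J2 t : ℝ) (hωb : 0 < ωb) (hωc : 0 < ωc) (hJ1 : J1 ≠ 0)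
    (Δ Ω e1 e2 ξ1 ξ2 p : ℝ) (α β : ℂ)
    (hΔ : Δ = ωb - ωc) (hΩ : Ω = Real.sqrt (J1 ^ 2 + Δ ^ 2))
    (he1 : e1 = Ω - J2) (he2 : e2 = -Ω - J2)
    (hξ1 : ξ1 = (Δ + Ω) / J1) (hξ2 : ξ2 = (Δ - Ω) / J1)
    (hα : α = (Complex.exp (-Complex.I * ((e1 * t : ℝ) : ℂ)) * (ξ1 : ℂ) -
        Complex.exp (-Complex.I * ((e2 * t : ℝ) : ℂ)) * (ξ2 : ℂ)) / ((ξ1 : ℂ) - (ξ2 : ℂ)))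
    (hβ : β = (Complex.exp (-Complex.I * ((e1 * t : ℝ) : ℂ)) -
        Complex.exp (-Complex.I * ((e2 * t : ℝ) : ℂ))) / ((ξ1 : ℂ) - (ξ2 : ℂ)))
    (hp : p = ‖α‖ ^ 2)
    (ρb f1 : Matrix (Fin 2) (Fin 2) ℝ)
    (hρb : ρb = !![p, 0; 0, 1 - p])
    (hf1 : f1 = (1 / 2 : ℝ) • !![1, 1; 1, 1])
    (hA : ((ρb - f1) * (ρb - f1)ᵀ).PosSemidef)
    (Ttr : ℝ) (hTtr : Ttr = (1 / 2) * hA.sqrt.trace)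
    (ε1 ε4 R : ℝ)
    (hε1 : ε1 = min (min (Ω - J2) (-Ω - J2)) (min (J2 + (ωb + ωc)) (J2 - (ωb + ωc))))
    (hε4 : ε4 = max (max (Ω - J2) (-Ω - J2)) (max (J2 + (ωb + ωc)) (J2 - (ωb + ωc))))
    (hR : R = (ε4 - ε1) - 2 * (ωb + ωc) * |1 - 2 * p|) :
    4 * Ttr ^ 2 = 1 + (ε4 - ε1 - R) ^ 2 / (4 * (ωb + ωc) ^ 2) :=
  stmt_15_general ωb ωc hωb hωc p ρb f1 hρb hf1 hA Ttr hTtr ε1 ε4 R hR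
end

section
/- (Theorem 2, X-state form) Let ω_b ≥ ω_c > 0, J₁ ≠ 0, J₂ ∈ ℝ, and let ρ be a 4×4 complex Hermitian positive-semidefinite matrix of trace 1 in X-form in the ordered basis (|00⟩, |01⟩, |10⟩, |11⟩), i.e. ρ₁₂ = ρ₁₃ = ρ₂₄ = ρ₃₄ = 0 (and their conjugate entries vanish). Let λ₁ ≤ λ₂ ≤ λ₃ ≤ λ₄ be the eigenvalues of ρ and ε₁ ≤ ε₂ ≤ ε₃ ≤ ε₄ the eigenvalues of the full Hamiltonian H, both in ascending order. Then the total capacity dominates the sum of the subsystem capacities: (λ₄ − λ₁)(ε₄ − ε₁) + (λ₃ − λ₂)(ε₃ − ε₂) ≥ 2 ω_b |ρ₁₁ + ρ₂₂ − ρ₃₃ − ρ₄₄| + 2 ω_c |ρ₁₁ + ρ₃₃ − ρ₂₂ − ρ₄₄|. -/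
/-!
By Schur's theorem the diagonal of `ρ` is the image of its spectrum under the doubly stochastic
matrix `(|U i k|²)`, `U` a unitary of eigenvectors. For `u = ρ₁₁ - ρ₄₄` and `v = ρ₂₂ - ρ₃₃`
this gives `|u|, |v| ≤ λ₄ - λ₁` and `|u| + |v| ≤ (λ₄ - λ₁) + (λ₃ - λ₂)`. On the energy side the
levels come in the pairs `-J₂ ± Ω` and `J₂ ± (ω_b + ω_c)`, so `ε₄ - ε₁ ≥ 2 (ω_b + ω_c)` and
`(ε₄ - ε₁) + (ε₃ - ε₂) ≥ 2 Ω + 2 (ω_b + ω_c)`, while `Ω ≥ ω_b - ω_c`. Splitting the right-hand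
side as `(ω_b + ω_c) (|u + v| + |u - v|) + (ω_b - ω_c) (|u + v| - |u - v|)` bounds it by
`max |u| |v| (ε₄ - ε₁) + min |u| |v| (ε₃ - ε₂)`, and `(max, min)` is weakly majorized by
`(λ₄ - λ₁, λ₃ - λ₂)`.
-/

open Matrix Finset
open scoped ComplexOrder

theorem Finset.sum_mul_le_sum_abs_sub {ι : Type*} (s : Finset ι) {c : ι → ℝ}
    (hc : ∀ k ∈ s, |c k| ≤ 1) (hc₀ : ∑ k ∈ s, c k = 0) (e : ι → ℝ) (μ : ℝ) :
    ∑ k ∈ s, c k * e k ≤ ∑ k ∈ s, |e k - μ| :=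
  calc ∑ k ∈ s, c k * e k = ∑ k ∈ s, c k * (e k - μ) := by
        simp only [mul_sub, sum_sub_distrib, ← sum_mul, hc₀, zero_mul, sub_zero]
    _ ≤ ∑ k ∈ s, |e k - μ| := sum_le_sum fun k hk =>
        (le_abs_self _).trans <| by
          rw [abs_mul]; exact mul_le_of_le_one_left (abs_nonneg _) (hc k hk)

section Stochastic

variable {n : Type*} [Fintype n] [DecidableEq n] {M : Matrix n n ℝ}

theorem Matrix.mulVec_mem_Icc_of_mem_rowStochastic (hM : M ∈ rowStochastic ℝ n) {e : n → ℝ}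
    {a b : ℝ} (he : ∀ k, e k ∈ Set.Icc a b) (i : n) : (M *ᵥ e) i ∈ Set.Icc a b := by
  have hrow := sum_row_of_mem_rowStochastic hM i
  constructor
  · calc a = ∑ k, M i k * a := by rw [← sum_mul, hrow, one_mul]
      _ ≤ (M *ᵥ e) i := sum_le_sum fun k _ =>
          mul_le_mul_of_nonneg_left (he k).1 (nonneg_of_mem_rowStochastic hM)
  · calc (M *ᵥ e) i ≤ ∑ k, M i k * b := sum_le_sum fun k _ =>
          mul_le_mul_of_nonneg_left (he k).2 (nonneg_of_mem_rowStochastic hM)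
      _ = b := by rw [← sum_mul, hrow, one_mul]

theorem Matrix.sum_mulVec_sub_sum_mulVec_le (hM : M ∈ doublyStochastic ℝ n) {S T : Finset n}
    (hST : Disjoint S T) (hcard : #S = #T) (e : n → ℝ) (μ : ℝ) :
    ∑ i ∈ S, (M *ᵥ e) i - ∑ i ∈ T, (M *ᵥ e) i ≤ ∑ k, |e k - μ| := by
  set c : n → ℝ := fun k => ∑ i ∈ S, M i k - ∑ i ∈ T, M i k
  have hc : ∀ k ∈ univ, |c k| ≤ 1 := by
    intro k _
    have hcol : ∑ i ∈ S ∪ T, M i k ≤ 1 := sum_col_of_mem_doublyStochastic hM k ▸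
      sum_le_univ_sum_of_nonneg fun i => nonneg_of_mem_doublyStochastic hM
    rw [sum_union hST] at hcol
    have hS := sum_nonneg fun i (_ : i ∈ S) => nonneg_of_mem_doublyStochastic hM (i := i) (j := k)
    have hT := sum_nonneg fun i (_ : i ∈ T) => nonneg_of_mem_doublyStochastic hM (i := i) (j := k)
    rw [abs_le]
    constructor <;> linarith
  have hc₀ : ∑ k, c k = 0 := by
    simp only [c, sum_sub_distrib, sum_comm (s := univ), sum_row_of_mem_doublyStochastic hM,
      sum_const, hcard, sub_self]
  calc ∑ i ∈ S, (M *ᵥ e) i - ∑ i ∈ T, (M *ᵥ e) i = ∑ k, c k * e k := by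
        simp only [c, mulVec, dotProduct, sub_mul, sum_sub_distrib, sum_mul]
        rw [sum_comm (s := S), sum_comm (s := T)]
    _ ≤ ∑ k, |e k - μ| := sum_mul_le_sum_abs_sub univ hc hc₀ e μ

theorem Matrix.abs_sub_add_abs_sub_mulVec_le {M : Matrix (Fin 4) (Fin 4) ℝ}
    (hM : M ∈ doublyStochastic ℝ (Fin 4)) (e : Fin 4 → ℝ) (μ : ℝ) :
    |(M *ᵥ e) 0 - (M *ᵥ e) 3| + |(M *ᵥ e) 1 - (M *ᵥ e) 2| ≤ ∑ k, |e k - μ| := by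
  have key (i j k l : Fin 4) (h : Disjoint ({i, j} : Finset (Fin 4)) {k, l})
      (hij : i ≠ j) (hkl : k ≠ l) :
      (M *ᵥ e) i + (M *ᵥ e) j - ((M *ᵥ e) k + (M *ᵥ e) l) ≤ ∑ m, |e m - μ| := by
    simpa only [sum_pair hij, sum_pair hkl] using
      sum_mulVec_sub_sum_mulVec_le hM h (by rw [card_pair hij, card_pair hkl]) e μ
  have h₁ := key 0 1 3 2 (by decide) (by decide) (by decide)
  have h₂ := key 0 2 3 1 (by decide) (by decide) (by decide)
  have h₃ := key 3 1 0 2 (by decide) (by decide) (by decide)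
  have h₄ := key 3 2 0 1 (by decide) (by decide) (by decide)
  rcases abs_cases ((M *ᵥ e) 0 - (M *ᵥ e) 3) with ⟨h, _⟩ | ⟨h, _⟩ <;>
    rcases abs_cases ((M *ᵥ e) 1 - (M *ᵥ e) 2) with ⟨h', _⟩ | ⟨h', _⟩ <;> linarith

theorem Matrix.IsHermitian.exists_mem_doublyStochastic_re_diag_eq {𝕜 : Type*} [RCLike 𝕜]
    {A : Matrix n n 𝕜} (hA : A.IsHermitian) :
    ∃ M ∈ doublyStochastic ℝ n, (fun i => RCLike.re (A i i)) = M *ᵥ hA.eigenvalues := by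
  set U : Matrix n n 𝕜 := (hA.eigenvectorUnitary : Matrix n n 𝕜)
  have hU := hA.eigenvectorUnitary.2
  refine ⟨of fun i k => ‖U i k‖ ^ 2, ?_, ?_⟩
  · rw [mem_doublyStochastic_iff_sum]
    refine ⟨fun i k => sq_nonneg _, fun i => ?_, fun k => ?_⟩
    · have h := congr_fun₂ (mem_unitaryGroup_iff.mp hU) i i
      simp only [mul_apply, star_apply, RCLike.star_def, RCLike.mul_conj, one_apply_eq] at h
      exact_mod_cast h
    · have h := congr_fun₂ (mem_unitaryGroup_iff'.mp hU) k k
      simp only [mul_apply, star_apply, RCLike.star_def, RCLike.conj_mul, one_apply_eq] at h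
      exact_mod_cast h
  · funext i
    have h : A i i = ∑ k, ((‖U i k‖ ^ 2 * hA.eigenvalues k : ℝ) : 𝕜) := by
      conv_lhs => rw [hA.spectral_theorem, Unitary.conjStarAlgAut_apply, mul_apply]
      refine sum_congr rfl fun k _ => ?_
      rw [mul_diagonal, star_apply, mul_right_comm, RCLike.star_def, RCLike.mul_conj]
      simp [U]
    simp only [h, map_sum, RCLike.ofReal_re]
    rfl

end Stochastic

section SortedQuadruple

variable {a b c d : ℝ}

theorem mem_Icc_of_mem_quadruple (h : a ≤ b ∧ b ≤ c ∧ c ≤ d) {x : ℝ}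
    (hx : x ∈ ({a, b, c, d} : Multiset ℝ)) : x ∈ Set.Icc a d := by
  obtain ⟨hab, hbc, hcd⟩ := h
  simp only [Multiset.insert_eq_cons, Multiset.mem_cons, Multiset.mem_singleton] at hx
  rcases hx with rfl | rfl | rfl | rfl <;> constructor <;> linarith

theorem sum_map_abs_sub_midpoint_quadruple (h : a ≤ b ∧ b ≤ c ∧ c ≤ d) :
    (({a, b, c, d} : Multiset ℝ).map fun x => |x - (b + c) / 2|).sum = (d - a) + (c - b) := by
  obtain ⟨hab, hbc, hcd⟩ := h
  simp only [Multiset.insert_eq_cons, Multiset.map_cons, Multiset.sum_cons,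
    Multiset.map_singleton, Multiset.sum_singleton]
  rw [abs_of_nonpos (by linarith), abs_of_nonpos (by linarith), abs_of_nonneg (by linarith),
    abs_of_nonneg (by linarith)]
  ring

theorem abs_sub_le_of_quadruple_eq (h : a ≤ b ∧ b ≤ c ∧ c ≤ d) {x y z t : ℝ}
    (hs : ({a, b, c, d} : Multiset ℝ) = {x, y, z, t}) : |z - t| ≤ d - a :=
  Real.dist_le_of_mem_Icc (mem_Icc_of_mem_quadruple h (hs ▸ by simp))
    (mem_Icc_of_mem_quadruple h (hs ▸ by simp))

theorem abs_sub_add_abs_sub_le_of_quadruple_eq (h : a ≤ b ∧ b ≤ c ∧ c ≤ d) {x y z t : ℝ}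
    (hs : ({a, b, c, d} : Multiset ℝ) = {x, y, z, t}) :
    |x - y| + |z - t| ≤ (d - a) + (c - b) := by
  set μ := (b + c) / 2
  have hsum := sum_map_abs_sub_midpoint_quadruple h
  rw [hs] at hsum
  simp only [Multiset.insert_eq_cons, Multiset.map_cons, Multiset.sum_cons,
    Multiset.map_singleton, Multiset.sum_singleton] at hsum
  have hxy := abs_sub_le x μ y
  have hzt := abs_sub_le z μ t
  rw [abs_sub_comm μ y] at hxy
  rw [abs_sub_comm μ t] at hzt
  linarith

end SortedQuadruple

theorem Matrix.IsHermitian.abs_re_diag_sub_le {𝕜 : Type*} [RCLike 𝕜]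
    {A : Matrix (Fin 4) (Fin 4) 𝕜} (hA : A.IsHermitian) {l₁ l₂ l₃ l₄ : ℝ}
    (hl : l₁ ≤ l₂ ∧ l₂ ≤ l₃ ∧ l₃ ≤ l₄)
    (hspec : ({l₁, l₂, l₃, l₄} : Multiset ℝ) = Multiset.map hA.eigenvalues univ.val) :
    |RCLike.re (A 0 0) - RCLike.re (A 3 3)| ≤ l₄ - l₁ ∧
      |RCLike.re (A 1 1) - RCLike.re (A 2 2)| ≤ l₄ - l₁ ∧
      |RCLike.re (A 0 0) - RCLike.re (A 3 3)| + |RCLike.re (A 1 1) - RCLike.re (A 2 2)| ≤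
        (l₄ - l₁) + (l₃ - l₂) := by
  obtain ⟨M, hM, hdiag⟩ := hA.exists_mem_doublyStochastic_re_diag_eq
  have hre (i : Fin 4) : RCLike.re (A i i) = (M *ᵥ hA.eigenvalues) i := congr_fun hdiag i
  have hMe := mulVec_mem_Icc_of_mem_rowStochastic
    (mem_doublyStochastic_iff_mem_rowStochastic_and_mem_colStochastic.1 hM).1
    fun k => mem_Icc_of_mem_quadruple hl (hspec ▸ Multiset.mem_map_of_mem _ (mem_univ k))
  have hspread : ∑ k, |hA.eigenvalues k - (l₂ + l₃) / 2| = (l₄ - l₁) + (l₃ - l₂) := by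
    rw [← sum_map_abs_sub_midpoint_quadruple hl, hspec, Multiset.map_map]
    rfl
  simp only [hre, ← Real.dist_eq]
  refine ⟨Real.dist_le_of_mem_Icc (hMe 0) (hMe 3), Real.dist_le_of_mem_Icc (hMe 1) (hMe 2), ?_⟩
  simpa only [Real.dist_eq, hspread] using
    abs_sub_add_abs_sub_mulVec_le hM hA.eigenvalues ((l₂ + l₃) / 2)

theorem abs_add_add_abs_sub (u v : ℝ) : |u + v| + |u - v| = 2 * max |u| |v| := by
  refine le_antisymm ?_ ?_
  · have := le_max_left |u| |v|
    have := le_max_right |u| |v|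
    rcases abs_cases (u + v) with ⟨h, _⟩ | ⟨h, _⟩ <;>
      rcases abs_cases (u - v) with ⟨h', _⟩ | ⟨h', _⟩ <;>
      linarith [le_abs_self u, neg_abs_le u, le_abs_self v, neg_abs_le v]
  · have hu := abs_add_le (u + v) (u - v)
    have hv := abs_sub (u + v) (u - v)
    rw [add_add_sub_cancel, ← two_mul, abs_mul, abs_two] at hu
    rw [add_sub_sub_cancel, ← two_mul, abs_mul, abs_two] at hv
    rw [mul_max_of_nonneg _ _ zero_le_two]
    exact max_le hu hv

theorem abs_add_sub_abs_sub_le (u v : ℝ) : |u + v| - |u - v| ≤ 2 * min |u| |v| := by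
  have hu : |u + v| ≤ |2 * u| + |-(u - v)| := by
    simpa only [show 2 * u + -(u - v) = u + v by ring] using abs_add_le (2 * u) (-(u - v))
  have hv : |u + v| ≤ |u - v| + |2 * v| := by
    simpa only [show u - v + 2 * v = u + v by ring] using abs_add_le (u - v) (2 * v)
  rw [abs_neg, abs_mul, abs_two] at hu
  rw [abs_mul, abs_two] at hv
  rw [mul_min_of_nonneg _ _ zero_le_two, le_min_iff]
  constructor <;> linarith

theorem two_mul_abs_add_add_two_mul_abs_sub_le {ωb ωc Ω E₁ E₂ : ℝ} (u v : ℝ) (hω : ωc ≤ ωb)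
    (hΩ : ωb - ωc ≤ Ω) (hE₁ : 2 * (ωb + ωc) ≤ E₁) (hE : 2 * Ω + 2 * (ωb + ωc) ≤ E₁ + E₂) :
    2 * ωb * |u + v| + 2 * ωc * |u - v| ≤ max |u| |v| * E₁ + min |u| |v| * E₂ := by
  have hmin : 0 ≤ min |u| |v| := le_min (abs_nonneg u) (abs_nonneg v)
  have hmin_max : min |u| |v| ≤ max |u| |v| := min_le_max
  calc 2 * ωb * |u + v| + 2 * ωc * |u - v|
        = (ωb + ωc) * (|u + v| + |u - v|) + (ωb - ωc) * (|u + v| - |u - v|) := by ring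
    _ ≤ (ωb + ωc) * (2 * max |u| |v|) + Ω * (2 * min |u| |v|) := by
        rw [abs_add_add_abs_sub]
        refine add_le_add le_rfl ?_
        calc (ωb - ωc) * (|u + v| - |u - v|) ≤ (ωb - ωc) * (2 * min |u| |v|) := by
              gcongr
              exact abs_add_sub_abs_sub_le u v
          _ ≤ Ω * (2 * min |u| |v|) := by gcongr
    _ ≤ max |u| |v| * E₁ + min |u| |v| * E₂ := by
        nlinarith [mul_nonneg (sub_nonneg.2 hmin_max) (sub_nonneg.2 hE₁),
          mul_nonneg hmin (sub_nonneg.2 hE)]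

theorem mul_add_mul_le_of_weakly_majorized {x₁ x₂ y₁ y₂ a₁ a₂ : ℝ} (h₁ : x₁ ≤ y₁)
    (h₁₂ : x₁ + x₂ ≤ y₁ + y₂) (ha : a₂ ≤ a₁) (ha₂ : 0 ≤ a₂) :
    x₁ * a₁ + x₂ * a₂ ≤ y₁ * a₁ + y₂ * a₂ := by
  nlinarith [mul_nonneg (sub_nonneg.2 h₁) (sub_nonneg.2 ha), mul_nonneg (sub_nonneg.2 h₁₂) ha₂]

theorem stmt_18_general (ωb ωc J1 J2 : ℝ) (hω : ωb ≥ ωc)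
    (Δ Ω : ℝ) (hΔ : Δ = ωb - ωc) (hΩ : Ω = Real.sqrt (J1 ^ 2 + Δ ^ 2))
    (ρ : Matrix (Fin 4) (Fin 4) ℂ)
    (hHerm : ρ.IsHermitian)
    (lam1 lam2 lam3 lam4 : ℝ)
    (hlam : lam1 ≤ lam2 ∧ lam2 ≤ lam3 ∧ lam3 ≤ lam4)
    (hlamms : ({lam1, lam2, lam3, lam4} : Multiset ℝ) =
      Multiset.map hHerm.eigenvalues Finset.univ.val)
    (ε1 ε2 ε3 ε4 : ℝ)
    (hε : ε1 ≤ ε2 ∧ ε2 ≤ ε3 ∧ ε3 ≤ ε4)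
    (hεms : ({ε1, ε2, ε3, ε4} : Multiset ℝ) =
      {Ω - J2, -Ω - J2, J2 + (ωb + ωc), J2 - (ωb + ωc)}) :
    (lam4 - lam1) * (ε4 - ε1) + (lam3 - lam2) * (ε3 - ε2) ≥
      2 * ωb * |(ρ 0 0).re + (ρ 1 1).re - (ρ 2 2).re - (ρ 3 3).re| +
      2 * ωc * |(ρ 0 0).re + (ρ 2 2).re - (ρ 1 1).re - (ρ 3 3).re| := by
  obtain ⟨hu, hv, huv⟩ := hHerm.abs_re_diag_sub_le hlam hlamms
  simp only [RCLike.re_to_complex] at hu hv huv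
  set u := (ρ 0 0).re - (ρ 3 3).re
  set v := (ρ 1 1).re - (ρ 2 2).re
  have hE₁ := abs_sub_le_of_quadruple_eq hε hεms
  have hE := abs_sub_add_abs_sub_le_of_quadruple_eq hε hεms
  have hΔΩ : ωb - ωc ≤ Ω := by
    rw [hΩ, ← hΔ]
    exact (le_abs_self Δ).trans (Real.abs_le_sqrt (le_add_of_nonneg_left (sq_nonneg J1)))
  rw [ge_iff_le, show (ρ 0 0).re + (ρ 1 1).re - (ρ 2 2).re - (ρ 3 3).re = u + v by ring,
    show (ρ 0 0).re + (ρ 2 2).re - (ρ 1 1).re - (ρ 3 3).re = u - v by ring]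
  calc 2 * ωb * |u + v| + 2 * ωc * |u - v| ≤ max |u| |v| * (ε4 - ε1) + min |u| |v| * (ε3 - ε2) :=
        two_mul_abs_add_add_two_mul_abs_sub_le u v hω hΔΩ
          (by linarith [le_abs_self (J2 + (ωb + ωc) - (J2 - (ωb + ωc)))])
          (by linarith [le_abs_self (Ω - J2 - (-Ω - J2)),
            le_abs_self (J2 + (ωb + ωc) - (J2 - (ωb + ωc)))])
    _ ≤ (lam4 - lam1) * (ε4 - ε1) + (lam3 - lam2) * (ε3 - ε2) :=
        mul_add_mul_le_of_weakly_majorized (max_le hu hv) (by rwa [max_add_min])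
          (by linarith) (by linarith)

/-- Theorem 2, X-state form: for an X-state `ρ`, the total capacity
dominates the sum of the battery and charger capacities. -/
theorem stmt_18 (ωb ωc J1 J2 : ℝ) (hω : ωb ≥ ωc) (hωc : 0 < ωc) (hJ1 : J1 ≠ 0)
    (Δ Ω : ℝ) (hΔ : Δ = ωb - ωc) (hΩ : Ω = Real.sqrt (J1 ^ 2 + Δ ^ 2))
    (ρ : Matrix (Fin 4) (Fin 4) ℂ)
    (hHerm : ρ.IsHermitian) (hPSD : ρ.PosSemidef) (htr : ρ.trace = 1)
    (hX12 : ρ 0 1 = 0) (hX13 : ρ 0 2 = 0) (hX24 : ρ 1 3 = 0) (hX34 : ρ 2 3 = 0)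
    (hX21 : ρ 1 0 = 0) (hX31 : ρ 2 0 = 0) (hX42 : ρ 3 1 = 0) (hX43 : ρ 3 2 = 0)
    (lam1 lam2 lam3 lam4 : ℝ)
    (hlam : lam1 ≤ lam2 ∧ lam2 ≤ lam3 ∧ lam3 ≤ lam4)
    (hlamms : ({lam1, lam2, lam3, lam4} : Multiset ℝ) =
      Multiset.map hHerm.eigenvalues Finset.univ.val)
    (ε1 ε2 ε3 ε4 : ℝ)
    (hε : ε1 ≤ ε2 ∧ ε2 ≤ ε3 ∧ ε3 ≤ ε4)
    (hεms : ({ε1, ε2, ε3, ε4} : Multiset ℝ) =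
      {Ω - J2, -Ω - J2, J2 + (ωb + ωc), J2 - (ωb + ωc)}) :
    (lam4 - lam1) * (ε4 - ε1) + (lam3 - lam2) * (ε3 - ε2) ≥
      2 * ωb * |(ρ 0 0).re + (ρ 1 1).re - (ρ 2 2).re - (ρ 3 3).re| +
      2 * ωc * |(ρ 0 0).re + (ρ 2 2).re - (ρ 1 1).re - (ρ 3 3).re| :=
  stmt_18_general ωb ωc J1 J2 hω Δ Ω hΔ hΩ ρ hHerm lam1 lam2 lam3 lam4 hlam hlamms ε1 ε2 ε3 ε4 hε
    hεms
end
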